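/- arXiv:1001.0153 — 7 statements merged into one kernel-verified Lean document; each statement's English description precedes it below -/
import Mathlib

section
/- Let C be a field, let V be a finite-dimensional C-vector space of dimension a ≥ 1, and let G be a subgroup of GL(V) acting irreducibly on V (i.e., the only G-invariant subspaces of V are 0 and V). Suppose f : V → V is a nonzero C-linear endomorphism and c : G → Cˣ is a function such that g ∘ f ∘ g⁻¹ = c(g) • f for every g ∈ G. Then f is bijective, and c(g)^a = 1 for every g ∈ G. -/
/-- Let `C` be a field, `V` a finite-dimensional `C`-vector space of
dimension `a ≥ 1`, and `G` a subgroup of `GL(V)` acting irreducibly on `V`.  If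
`f : V → V` is a nonzero `C`-linear endomorphism and `c : G → Cˣ` satisfies
`g ∘ f ∘ g⁻¹ = c(g) • f` for all `g ∈ G`, then `f` is bijective and `c(g)^a = 1`
for every `g ∈ G`. -/
theorem stmt0 (C : Type*) [Field C] (V : Type*) [AddCommGroup V] [Module C V]
    [FiniteDimensional C V] (a : ℕ) (ha : 1 ≤ a) (hdim : Module.finrank C V = a)
    (G : Subgroup (LinearMap.GeneralLinearGroup C V))
    (hirr : ∀ W : Submodule C V,
      (∀ g : LinearMap.GeneralLinearGroup C V, g ∈ G → W.map (g : V →ₗ[C] V) ≤ W) →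
      W = ⊥ ∨ W = ⊤)
    (f : V →ₗ[C] V) (hf : f ≠ 0) (c : G → Cˣ)
    (hc : ∀ g : G, ((g : LinearMap.GeneralLinearGroup C V) : V →ₗ[C] V) ∘ₗ f ∘ₗ
        (((g : LinearMap.GeneralLinearGroup C V)⁻¹ : LinearMap.GeneralLinearGroup C V) :
          V →ₗ[C] V) = (c g : C) • f) :
    Function.Bijective f ∧ ∀ g : G, (c g : C) ^ a = 1 := by
  -- ker f is G-invariant
  have hker : LinearMap.ker f = ⊥ := by
    have hstab : ∀ g : LinearMap.GeneralLinearGroup C V, g ∈ G →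
        (LinearMap.ker f).map (g : V →ₗ[C] V) ≤ LinearMap.ker f := by
      intro g hg v hv
      rcases hv with ⟨w, hw, rfl⟩
      have hrel := hc ⟨g, hg⟩
      have := congrArg (fun T : V →ₗ[C] V => T ((g : V →ₗ[C] V) w)) hrel
      simp only [LinearMap.comp_apply, LinearMap.smul_apply] at this
      have hginv : ((g⁻¹ : LinearMap.GeneralLinearGroup C V) : V →ₗ[C] V)
          ((g : V →ₗ[C] V) w) = w := by
        have h1 : ((g⁻¹ : LinearMap.GeneralLinearGroup C V) : V →ₗ[C] V) *
            (g : V →ₗ[C] V) = 1 := g.inv_mul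
        calc ((g⁻¹ : LinearMap.GeneralLinearGroup C V) : V →ₗ[C] V) ((g : V →ₗ[C] V) w)
            = (((g⁻¹ : LinearMap.GeneralLinearGroup C V) : V →ₗ[C] V) *
              (g : V →ₗ[C] V)) w := rfl
          _ = (1 : V →ₗ[C] V) w := by rw [h1]
          _ = w := rfl
      rw [hginv, LinearMap.mem_ker.mp hw, map_zero] at this
      have : f ((g : V →ₗ[C] V) w) = 0 := by
        have hc0 : ((c ⟨g, hg⟩ : C)) • f ((g : V →ₗ[C] V) w) = 0 := this.symm
        exact (smul_eq_zero_iff_right (Units.ne_zero _)).mp hc0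
      exact LinearMap.mem_ker.mpr this
    rcases hirr (LinearMap.ker f) hstab with h | h
    · exact h
    · exact absurd (LinearMap.ker_eq_top.mp h) hf
  have hinj : Function.Injective f := LinearMap.ker_eq_bot.mp hker
  have hbij : Function.Bijective f :=
    ⟨hinj, LinearMap.surjective_of_injective hinj⟩
  refine ⟨hbij, fun g => ?_⟩
  -- take determinants
  have hdetf : LinearMap.det f ≠ 0 :=
    isUnit_iff_ne_zero.1 (f.isUnit_det ((LinearMap.isUnit_iff_ker_eq_bot f).mpr hker))
  have hrel := hc g
  have hdetrel := congrArg LinearMap.det hrel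
  rw [LinearMap.det_smul, LinearMap.det_comp, LinearMap.det_comp, hdim] at hdetrel
  have hgg : LinearMap.det ((g : LinearMap.GeneralLinearGroup C V) : V →ₗ[C] V) *
      LinearMap.det (((g : LinearMap.GeneralLinearGroup C V)⁻¹ :
        LinearMap.GeneralLinearGroup C V) : V →ₗ[C] V) = 1 := by
    rw [← LinearMap.det_comp]
    have : ((g : LinearMap.GeneralLinearGroup C V) : V →ₗ[C] V) ∘ₗ
        (((g : LinearMap.GeneralLinearGroup C V)⁻¹ :
          LinearMap.GeneralLinearGroup C V) : V →ₗ[C] V) = LinearMap.id := by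
      have := congrArg (Units.val)
        (mul_inv_cancel (g : LinearMap.GeneralLinearGroup C V))
      exact this
    rw [this, LinearMap.det_id]
  -- det f = det g * det f * det g⁻¹ ... rearrange
  have : LinearMap.det f = (c g : C) ^ a * LinearMap.det f := by
    calc LinearMap.det f
        = (LinearMap.det ((g : LinearMap.GeneralLinearGroup C V) : V →ₗ[C] V) *
          LinearMap.det (((g : LinearMap.GeneralLinearGroup C V)⁻¹ :
            LinearMap.GeneralLinearGroup C V) : V →ₗ[C] V)) * LinearMap.det f := by
          rw [hgg, one_mul]
      _ = (c g : C) ^ a * LinearMap.det f := by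
          rw [← hdetrel]; ring
  exact mul_right_cancel₀ hdetf (this.symm.trans (one_mul _).symm)
end

section
/- Let K be a differential field of characteristic 0 with derivation D, let k ⊆ K be a subfield with K/k a finite Galois extension with group G = Gal(K/k) of order m, and suppose every σ ∈ G commutes with D. Let c : G × G → Kˣ take values in the constants of K (D(c(σ,τ)) = 0 for all σ,τ) and let f : G → Kˣ satisfy f(στ) = c(σ,τ)·f(σ)·σ(f(τ)) for all σ,τ ∈ G. Then the element v := −(1/m)·Σ_{τ∈G} logD f(τ) of K satisfies σ(v) − v = logD f(σ) for every σ ∈ G, and moreover −m·v = logD(Π_{τ∈G} f(τ)). -/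
/-!
Taking logarithmic derivatives turns the twisted multiplicativity of `f` into the additive
1-cocycle identity `g (σ τ) = g σ + σ (g τ)` for `g := logD ∘ f`, because `D` commutes with
`G` and kills the constants `c σ τ`. Summing this identity over `τ` gives
`∑ g = m • g σ + σ (∑ g)`, so `-(1/m) ∑ g` is a primitive of the cocycle; and
`logD (∏ f τ) = ∑ g` since `logD` is additive.
-/

section LogDeriv

variable {K : Type*} [Field K] (D : K → K) (hDmul : ∀ x y : K, D (x * y) = x * D y + D x * y)
include hDmul

theorem leibniz_map_one : D 1 = 0 := by
  simpa using hDmul 1 1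

theorem logD_mul {x y : K} (hx : x ≠ 0) (hy : y ≠ 0) :
    D (x * y) / (x * y) = D x / x + D y / y := by
  field_simp
  rw [hDmul]
  ring

theorem logD_prod {ι : Type*} (s : Finset ι) (g : ι → Kˣ) :
    D (∏ i ∈ s, (g i : K)) / ∏ i ∈ s, (g i : K) = ∑ i ∈ s, D (g i : K) / (g i : K) := by
  classical
  induction s using Finset.induction with
  | empty => simp [leibniz_map_one D hDmul]
  | insert a s ha ih =>
    rw [Finset.prod_insert ha, Finset.sum_insert ha,
      logD_mul D hDmul (g a).ne_zero (Finset.prod_ne_zero_iff.2 fun i _ => (g i).ne_zero), ih]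

theorem logD_const_mul_mul_map (σ : K →+* K) (hσ : ∀ x, σ (D x) = D (σ x)) {c x y : K}
    (hc : c ≠ 0) (hDc : D c = 0) (hx : x ≠ 0) (hy : y ≠ 0) :
    D (c * x * σ y) / (c * x * σ y) = D x / x + σ (D y / y) := by
  have hσy : σ y ≠ 0 := (map_ne_zero σ).2 hy
  rw [logD_mul D hDmul (mul_ne_zero hc hx) hσy, logD_mul D hDmul hc hx, hDc, map_div₀, hσ]
  ring

end LogDeriv

theorem sum_cocycle_eq_card_smul_add_smul_sum {G M : Type*} [Group G] [Fintype G]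
    [AddCommMonoid M] [DistribMulAction G M] {g : G → M}
    (hg : ∀ σ τ, g (σ * τ) = g σ + σ • g τ) (σ : G) :
    ∑ τ, g τ = Fintype.card G • g σ + σ • ∑ τ, g τ := by
  calc ∑ τ, g τ = ∑ τ, g (σ * τ) :=
        (Fintype.sum_equiv (Equiv.mulLeft σ) _ _ fun _ => rfl).symm
    _ = Fintype.card G • g σ + σ • ∑ τ, g τ := by
      simp only [hg, Finset.sum_add_distrib, Finset.sum_const, Finset.card_univ, Finset.smul_sum]

theorem stmt1_general (k K : Type*) [Field k] [Field K] [Algebra k K] [CharZero K]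
    [FiniteDimensional k K]
    (D : K → K)
    (hDmul : ∀ x y : K, D (x * y) = x * D y + D x * y)
    (hcomm : ∀ (σ : K ≃ₐ[k] K) (x : K), σ (D x) = D (σ x))
    (m : ℕ) (hm : Fintype.card (K ≃ₐ[k] K) = m)
    (c : (K ≃ₐ[k] K) → (K ≃ₐ[k] K) → Kˣ)
    (hcconst : ∀ σ τ : K ≃ₐ[k] K, D (c σ τ : K) = 0)
    (f : (K ≃ₐ[k] K) → Kˣ)
    (hf : ∀ σ τ : K ≃ₐ[k] K, (f (σ * τ) : K) = (c σ τ : K) * (f σ : K) * σ (f τ : K)) :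
    (∀ σ : K ≃ₐ[k] K,
        σ (-(1 / (m : K)) * ∑ τ : K ≃ₐ[k] K, D (f τ : K) / (f τ : K)) -
          (-(1 / (m : K)) * ∑ τ : K ≃ₐ[k] K, D (f τ : K) / (f τ : K)) =
        D (f σ : K) / (f σ : K)) ∧
      -(m : K) * (-(1 / (m : K)) * ∑ τ : K ≃ₐ[k] K, D (f τ : K) / (f τ : K)) =
        D (∏ τ : K ≃ₐ[k] K, (f τ : K)) / ∏ τ : K ≃ₐ[k] K, (f τ : K) := by
  have hm0 : (m : K) ≠ 0 := by
    rw [← hm]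
    exact_mod_cast Fintype.card_ne_zero
  have hcocycle : ∀ σ τ : K ≃ₐ[k] K, D (f (σ * τ) : K) / (f (σ * τ) : K) =
      D (f σ : K) / (f σ : K) + σ • (D (f τ : K) / (f τ : K)) := fun σ τ => by
    rw [hf, AlgEquiv.smul_def]
    exact logD_const_mul_mul_map D hDmul (σ : K ≃+* K).toRingHom (hcomm σ) (c σ τ).ne_zero
      (hcconst σ τ) (f σ).ne_zero (f τ).ne_zero
  refine ⟨fun σ => ?_, ?_⟩
  · have hsum := sum_cocycle_eq_card_smul_add_smul_sum
      (g := fun τ => D (f τ : K) / (f τ : K)) hcocycle σ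
    rw [hm, nsmul_eq_mul, AlgEquiv.smul_def] at hsum
    rw [map_mul, map_neg, map_div₀, map_one, map_natCast]
    linear_combination
      (1 / (m : K)) * hsum + inv_mul_cancel_left₀ hm0 (D (f σ : K) / (f σ : K))
  · rw [logD_prod D hDmul]
    field_simp

/-- Let `K` be a differential field of characteristic 0 with derivation `D`,
`k ⊆ K` a subfield with `K/k` finite Galois with group `G` of order `m`, each `σ ∈ G`
commuting with `D`.  If `c : G × G → Kˣ` takes values in the constants and
`f : G → Kˣ` satisfies `f(στ) = c(σ,τ)·f(σ)·σ(f(τ))`, then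
`v := −(1/m)·Σ_τ logD f(τ)` satisfies `σ(v) − v = logD f(σ)` for all `σ`, and
`−m·v = logD (Π_τ f(τ))`. -/
theorem stmt1 (k K : Type*) [Field k] [Field K] [Algebra k K] [CharZero K]
    [FiniteDimensional k K] [IsGalois k K]
    (D : K → K)
    (hDadd : ∀ x y : K, D (x + y) = D x + D y)
    (hDmul : ∀ x y : K, D (x * y) = x * D y + D x * y)
    (hcomm : ∀ (σ : K ≃ₐ[k] K) (x : K), σ (D x) = D (σ x))
    (m : ℕ) (hm : Fintype.card (K ≃ₐ[k] K) = m)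
    (c : (K ≃ₐ[k] K) → (K ≃ₐ[k] K) → Kˣ)
    (hcconst : ∀ σ τ : K ≃ₐ[k] K, D (c σ τ : K) = 0)
    (f : (K ≃ₐ[k] K) → Kˣ)
    (hf : ∀ σ τ : K ≃ₐ[k] K, (f (σ * τ) : K) = (c σ τ : K) * (f σ : K) * σ (f τ : K)) :
    (∀ σ : K ≃ₐ[k] K,
        σ (-(1 / (m : K)) * ∑ τ : K ≃ₐ[k] K, D (f τ : K) / (f τ : K)) -
          (-(1 / (m : K)) * ∑ τ : K ≃ₐ[k] K, D (f τ : K) / (f τ : K)) =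
        D (f σ : K) / (f σ : K)) ∧
      -(m : K) * (-(1 / (m : K)) * ∑ τ : K ≃ₐ[k] K, D (f τ : K) / (f τ : K)) =
        D (∏ τ : K ≃ₐ[k] K, (f τ : K)) / ∏ τ : K ≃ₐ[k] K, (f τ : K) :=
  stmt1_general k K D hDmul hcomm m hm c hcconst f hf
end

section
/- Let K be a differential field with derivation D, let k ⊆ K be a subfield with K/k a finite Galois extension with group G = Gal(K/k), and suppose every σ ∈ G commutes with D. Let u ∈ K and let f : G → Kˣ satisfy both σ(u) − u = logD f(σ) for every σ ∈ G and the 1-cocycle condition f(στ) = f(σ)·σ(f(τ)) for all σ,τ ∈ G. Then there exist w ∈ k and F ∈ Kˣ such that u = w + logD F. -/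
/-!
By Hilbert's Theorem 90 the cocycle `f` is a coboundary, `f σ = σ β / β` for some `β ∈ Kˣ`.
Since the Galois group commutes with `D`, the logarithmic derivative turns this into
`σ u - u = σ (logD β) - logD β`, so `u - logD β` is fixed by the Galois group and hence lies in `k`.
-/

namespace Derivation

section Leibniz

variable {A : Type*} [CommRing A] (D : A → A) (hadd : ∀ x y, D (x + y) = D x + D y)
  (hmul : ∀ x y, D (x * y) = x * D y + D x * y)

def ofLeibniz : Derivation ℤ A A :=
  mk' (AddMonoidHom.mk' D hadd).toIntLinearMap fun a b => by
    simp only [AddMonoidHom.coe_toIntLinearMap, AddMonoidHom.mk'_apply, hmul, smul_eq_mul]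
    ring

@[simp]
theorem ofLeibniz_apply (a : A) : ofLeibniz D hadd hmul a = D a := rfl

end Leibniz

theorem logDeriv_div {R K : Type*} [CommRing R] [Field K] [Algebra R K] (D : Derivation R K K)
    {a b : K} (ha : a ≠ 0) (hb : b ≠ 0) : D (a / b) / (a / b) = D a / a - D b / b := by
  rw [leibniz_div, smul_eq_mul, smul_eq_mul, smul_eq_mul]
  field_simp

end Derivation

theorem exists_units_eq_apply_div_of_cocycle {k K : Type*} [Field k] [Field K] [Algebra k K]
    [FiniteDimensional k K] (f : Gal(K/k) → Kˣ)
    (hf : ∀ σ τ, (f (σ * τ) : K) = f σ * σ (f τ)) :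
    ∃ β : Kˣ, ∀ σ : Gal(K/k), (f σ : K) = σ β / β := by
  obtain ⟨β, hβ⟩ := groupCohomology.isMulCoboundary₁_of_isMulCocycle₁_of_aut_to_units f
    fun σ τ => Units.ext <| (hf σ τ).trans (mul_comm _ _)
  exact ⟨β, fun σ => by simp [← hβ σ, AlgEquiv.smul_units_def]⟩

/-- Let `K` be a differential field with derivation `D`, `k ⊆ K` a subfield
with `K/k` finite Galois with group `G`, each `σ ∈ G` commuting with `D`.  Let `u ∈ K` and
`f : G → Kˣ` satisfy `σ(u) − u = logD f(σ)` and the 1-cocycle condition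
`f(στ) = f(σ)·σ(f(τ))`.  Then there are `w ∈ k` and `F ∈ Kˣ` with `u = w + logD F`. -/
theorem stmt3 (k K : Type*) [Field k] [Field K] [Algebra k K]
    [FiniteDimensional k K] [IsGalois k K]
    (D : K → K)
    (hDadd : ∀ x y : K, D (x + y) = D x + D y)
    (hDmul : ∀ x y : K, D (x * y) = x * D y + D x * y)
    (hcomm : ∀ (σ : K ≃ₐ[k] K) (x : K), σ (D x) = D (σ x))
    (u : K) (f : (K ≃ₐ[k] K) → Kˣ)
    (hf : ∀ σ : K ≃ₐ[k] K, σ u - u = D (f σ : K) / (f σ : K))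
    (hcocycle : ∀ σ τ : K ≃ₐ[k] K, (f (σ * τ) : K) = (f σ : K) * σ (f τ : K)) :
    ∃ (w : k) (F : Kˣ), u = algebraMap k K w + D (F : K) / (F : K) := by
  obtain ⟨β, hβ⟩ := exists_units_eq_apply_div_of_cocycle f hcocycle
  have hfixed (σ : K ≃ₐ[k] K) : σ (u - D β / β) = u - D β / β := by
    have hlog := (Derivation.ofLeibniz D hDadd hDmul).logDeriv_div
      ((map_ne_zero σ).2 β.ne_zero) β.ne_zero
    simp only [Derivation.ofLeibniz_apply] at hlog
    rw [map_sub, map_div₀, hcomm]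
    linear_combination (hf σ).trans (by rw [hβ σ, hlog])
  obtain ⟨w, hw⟩ := (IsGalois.mem_range_algebraMap_iff_fixed _).2 hfixed
  exact ⟨w, β, by rw [hw]; ring⟩
end

section
/- Let K be a differential field of characteristic 0 with derivation D, let k ⊆ K be a subfield with K/k a finite Galois extension with group G = Gal(K/k), suppose every σ ∈ G commutes with D, and suppose every constant of K lies in k. Let C denote the field of constants of K. Assume that every 2-cocycle of G with values in Kˣ is a coboundary, i.e., for every c : G × G → Kˣ satisfying c(σ,τ)·c(στ,ρ) = σ(c(τ,ρ))·c(σ,τρ) for all σ,τ,ρ ∈ G there exists f : G → Kˣ with c(σ,τ) = f(σ)·σ(f(τ))·f(στ)⁻¹ for all σ,τ. Define H := {u ∈ K : for every σ ∈ G there exists F ∈ Kˣ with σ(u) − u = logD F} and h := {w + logD F : w ∈ k, F ∈ Kˣ}. Then H and h are additive subgroups of K with h ⊆ H, and the quotient group H/h is isomorphic, as an abelian group, to the second group cohomology H²(G, Cˣ) of G with coefficients in the multiplicative group Cˣ of nonzero constants, with trivial G-action. -/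
/-!
For `u ∈ H` choose `F σ ∈ Kˣ` with `σ u - u = logD (F σ)`. The Galois coboundary
`(σ, τ) ↦ σ (F τ) · F σ / F (σ τ)` has logarithmic derivative
`σ (τ u - u) - (σ τ u - u) + (σ u - u) = 0`, so it is a 2-cocycle with values in `Cˣ`, on which
`G` acts trivially because `C ⊆ k`. Changing `F` multiplies it by the coboundary of a
`Cˣ`-valued cochain, so `u ↦ [δF]` is a well-defined homomorphism `H → H²(G, Cˣ)`.
If `δF` is the coboundary of constants `e`, then `F / e` is a 1-cocycle in `Kˣ`, hence
`F σ / e σ = σ β / β` by Hilbert 90, and `u - logD β` is Galois-invariant, i.e. lies in `k`: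
the kernel is `h`. Conversely a `Cˣ`-valued 2-cocycle is by hypothesis `δF` for some
`F : G → Kˣ`; then `σ ↦ logD (F σ)` is an additive 1-cocycle, so it is `σ ↦ σ u - u` by the
additive Hilbert 90, and `u ∈ H` is a preimage.
-/

/-- The field of constants of a differential field `(K, D)`. -/
def constSubfield (K : Type) [Field K] (D : K → K)
    (hDadd : ∀ x y : K, D (x + y) = D x + D y)
    (hDmul : ∀ x y : K, D (x * y) = x * D y + D x * y) : Subfield K where
  carrier := {x : K | D x = 0}
  one_mem' := by
    have h := hDmul 1 1
    simp only [one_mul, mul_one] at h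
    exact (left_eq_add.mp h)
  mul_mem' := by
    intro a b ha hb
    have h := hDmul a b
    simp only [Set.mem_setOf_eq] at *
    rw [ha, hb] at h
    simpa using h
  zero_mem' := by
    have h := hDadd 0 0
    rw [add_zero] at h
    exact (left_eq_add.mp h)
  add_mem' := by
    intro a b ha hb
    have h := hDadd a b
    simp only [Set.mem_setOf_eq] at *
    rw [ha, hb, add_zero] at h
    exact h
  neg_mem' := by
    intro a ha
    have h := hDadd a (-a)
    simp only [Set.mem_setOf_eq] at *
    rw [add_neg_cancel, ha, zero_add] at h
    have h0 : D (0 : K) = 0 := by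
      have h' := hDadd 0 0
      rw [add_zero] at h'
      exact (left_eq_add.mp h')
    rw [h0] at h
    exact h.symm
  inv_mem' := by
    intro a ha
    simp only [Set.mem_setOf_eq] at *
    rcases eq_or_ne a 0 with rfl | h0
    · rw [inv_zero]
      have h' := hDadd 0 0
      rw [add_zero] at h'
      exact (left_eq_add.mp h')
    · have h1 : D (1 : K) = 0 := by
        have h := hDmul 1 1
        simp only [one_mul, mul_one] at h
        exact (left_eq_add.mp h)
      have h := hDmul a a⁻¹
      rw [mul_inv_cancel₀ h0, h1, ha, zero_mul, add_zero] at h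
      have := h.symm
      exact (mul_eq_zero.mp this).resolve_left h0

open groupCohomology Differential
open scoped Differential

theorem isCoboundary₁_of_isCocycle₁_of_aut {k K : Type*} [Field k] [Field K] [Algebra k K]
    [FiniteDimensional k K] [IsGalois k K] (f : Gal(K/k) → K) (hf : IsCocycle₁ f) :
    IsCoboundary₁ f := by
  obtain ⟨a, ha⟩ := Algebra.trace_surjective k K 1
  have hsum : ∑ τ : Gal(K/k), τ a = 1 := by
    rw [← trace_eq_sum_automorphisms, ha, map_one]
  refine ⟨-∑ τ, f τ * τ a, fun σ => ?_⟩
  have hσ : ∀ τ, σ • (f τ * τ a) = f (σ * τ) * (σ * τ) a - f σ * (σ * τ) a := fun τ => by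
    rw [AlgEquiv.smul_def, map_mul, ← AlgEquiv.smul_def, ← AlgEquiv.mul_apply, hf σ τ]
    ring
  have hreindex : ∀ g : Gal(K/k) → K, ∑ τ, g (σ * τ) = ∑ τ, g τ :=
    fun g => Fintype.sum_equiv (Equiv.mulLeft σ) _ _ fun _ => rfl
  rw [smul_neg, Finset.smul_sum, Finset.sum_congr rfl fun τ _ => hσ τ, Finset.sum_sub_distrib,
    ← Finset.mul_sum, hreindex (fun τ => f τ * τ a), hreindex (fun τ => τ a), hsum]
  ring

section MulCoboundary

variable {G M : Type*} [Monoid G] [CommGroup M] [MulDistribMulAction G M]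

def mulCoboundary₂ (x : G → M) (p : G × G) : M := p.1 • x p.2 / x (p.1 * p.2) * x p.1

theorem mulCoboundary₂_mul (x y : G → M) :
    mulCoboundary₂ (x * y) = mulCoboundary₂ x * mulCoboundary₂ y := by
  funext p
  simp only [mulCoboundary₂, Pi.mul_apply, smul_mul', mul_div_mul_comm, mul_mul_mul_comm]

theorem mulCoboundary₂_div (x y : G → M) :
    mulCoboundary₂ (x / y) = mulCoboundary₂ x / mulCoboundary₂ y := by
  funext p
  simp only [mulCoboundary₂, Pi.div_apply, smul_div', div_div_div_comm, mul_div_mul_comm]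

theorem mulCoboundary₂_eq_one_iff (x : G → M) : mulCoboundary₂ x = 1 ↔ IsMulCocycle₁ x := by
  simp only [funext_iff, Prod.forall, Pi.one_apply, mulCoboundary₂, IsMulCocycle₁]
  refine forall₂_congr fun g h => ?_
  rw [div_mul_eq_mul_div, div_eq_one, eq_comm]

theorem isMulCocycle₁_smul_div (b : M) : IsMulCocycle₁ fun g : G => g • b / b := by
  intro g h
  simp only [smul_div', mul_smul, div_mul_div_cancel]

theorem isMulCocycle₂_mulCoboundary₂ (x : G → M) : IsMulCocycle₂ (mulCoboundary₂ x) := by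
  intro g h j
  apply Additive.ofMul.injective
  simp only [mulCoboundary₂, mul_assoc, smul_mul', smul_div', mul_smul, ofMul_mul, ofMul_div]
  abel

end MulCoboundary

section Galois

variable {k K : Type*} [Field k] [Field K] [Algebra k K]

theorem isMulCocycle₂_iff_galois (c : Gal(K/k) × Gal(K/k) → Kˣ) :
    IsMulCocycle₂ c ↔ ∀ σ τ ρ : Gal(K/k),
      (c (σ, τ) : K) * c (σ * τ, ρ) = σ (c (τ, ρ) : K) * c (σ, τ * ρ) := by
  refine forall₃_congr fun σ τ ρ => ?_
  rw [Units.ext_iff, Units.val_mul, Units.val_mul, AlgEquiv.smul_units_def, Units.coe_map,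
    MonoidHom.coe_coe, mul_comm]

theorem isMulCoboundary₂_iff_galois (c : Gal(K/k) × Gal(K/k) → Kˣ) :
    IsMulCoboundary₂ c ↔ ∃ f : Gal(K/k) → Kˣ,
      ∀ σ τ, (c (σ, τ) : K) = f σ * σ (f τ : K) * (f (σ * τ) : K)⁻¹ := by
  refine exists_congr fun f => forall₂_congr fun σ τ => ?_
  rw [Units.ext_iff, eq_comm, Units.val_mul, Units.val_div_eq_div_val, AlgEquiv.smul_units_def,
    Units.coe_map, MonoidHom.coe_coe, div_eq_mul_inv]
  constructor <;> intro h <;> rw [h] <;> ring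

end Galois

section LogDeriv

variable {K : Type*} [Field K] [Differential K]

theorem deriv_div_eq_zero_iff {a b : K} (ha : a ≠ 0) (hb : b ≠ 0) :
    (a / b)′ = 0 ↔ logDeriv a = logDeriv b := by
  rw [← logDeriv_eq_zero, logDeriv_div a b ha hb, sub_eq_zero]

theorem logDeriv_units_mul (a b : Kˣ) :
    logDeriv ((a * b : Kˣ) : K) = logDeriv (a : K) + logDeriv (b : K) := by
  rw [Units.val_mul, logDeriv_mul _ _ a.ne_zero b.ne_zero]

theorem logDeriv_units_div (a b : Kˣ) :
    logDeriv ((a / b : Kˣ) : K) = logDeriv (a : K) - logDeriv (b : K) := by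
  rw [Units.val_div_eq_div_val, logDeriv_div _ _ a.ne_zero b.ne_zero]

theorem logDeriv_units_inv (a : Kˣ) : logDeriv ((a⁻¹ : Kˣ) : K) = -logDeriv (a : K) := by
  rw [inv_eq_one_div, logDeriv_units_div, Units.val_one, logDeriv_one, zero_sub]

variable {k : Type*} [Field k] [Algebra k K] (hcomm : ∀ (σ : Gal(K/k)) (x : K), σ x′ = (σ x)′)
include hcomm

theorem logDeriv_smul_units (σ : Gal(K/k)) (a : Kˣ) :
    logDeriv ((σ • a : Kˣ) : K) = σ (logDeriv (a : K)) := by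
  simp only [AlgEquiv.smul_units_def, Units.coe_map, MonoidHom.coe_coe, Differential.logDeriv,
    map_div₀, hcomm]

theorem logDeriv_mulCoboundary₂ (F : Gal(K/k) → Kˣ) (p : Gal(K/k) × Gal(K/k)) :
    logDeriv ((mulCoboundary₂ F p : Kˣ) : K) =
      p.1 (logDeriv (F p.2 : K)) - logDeriv (F (p.1 * p.2) : K) + logDeriv (F p.1 : K) := by
  rw [mulCoboundary₂, logDeriv_units_mul, logDeriv_units_div, logDeriv_smul_units hcomm]

end LogDeriv

-- Phrased through `constSubfield`, so that `H2 (constantsRep k K)` is the group of the statement.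
abbrev constants (K : Type) [Field K] [Differential K] : Subfield K :=
  constSubfield K (Differential.deriv : Derivation ℤ K K) (map_add _) fun x y => by
    rw [Derivation.leibniz, smul_eq_mul, smul_eq_mul]
    ring

-- A `def` rather than an `abbrev`, so that `+` on it is always the representation's addition.
def constantsRep (k K : Type) [Field k] [Field K] [Algebra k K] [Differential K] :
    Rep ℤ Gal(K/k) :=
  Rep.trivial ℤ Gal(K/k) (Additive (constants K)ˣ)

@[simp]
theorem cocycles₂_zero_apply {G : Type} [Group G] {A : Rep ℤ G} (p : G × G) :
    (0 : cocycles₂ A) p = 0 := rfl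

@[simp]
theorem cocycles₂_add_apply {G : Type} [Group G] {A : Rep ℤ G} (z z' : cocycles₂ A)
    (p : G × G) : (z + z') p = z p + z' p := rfl

namespace constantsRep

variable {k K : Type} [Field k] [Field K] [Algebra k K] [Differential K]

@[simp]
theorem ρ_apply (σ : Gal(K/k)) (a : constantsRep k K) : (constantsRep k K).ρ σ a = a := rfl

def unitsVal (a : constantsRep k K) : Kˣ := Units.map (constants K).subtype (Additive.toMul a)

def ofUnits (a : Kˣ) (ha : (a : K)′ = 0) : constantsRep k K :=
  Additive.ofMul (Units.mk0 ⟨a, ha⟩ fun h => a.ne_zero (congrArg Subtype.val h))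

@[simp]
theorem unitsVal_ofUnits (a : Kˣ) (ha : (a : K)′ = 0) : unitsVal (ofUnits (k := k) a ha) = a :=
  Units.ext rfl

theorem deriv_unitsVal (a : constantsRep k K) : ((unitsVal a : Kˣ) : K)′ = 0 :=
  ((Additive.toMul a : (constants K)ˣ) : constants K).2

theorem unitsVal_injective : Function.Injective (unitsVal (k := k) (K := K)) :=
  fun _ _ h => Additive.toMul.injective (Units.map_injective Subtype.val_injective h)

@[simp]
theorem unitsVal_zero : unitsVal (0 : constantsRep k K) = 1 :=
  map_one _

@[simp]
theorem unitsVal_add (a b : constantsRep k K) : unitsVal (a + b) = unitsVal a * unitsVal b :=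
  map_mul _ _ _

@[simp]
theorem unitsVal_sub (a b : constantsRep k K) : unitsVal (a - b) = unitsVal a / unitsVal b :=
  map_div _ _ _

theorem smul_unitsVal [ContainConstants k K] (σ : Gal(K/k)) (a : constantsRep k K) :
    σ • unitsVal a = unitsVal a := by
  obtain ⟨w, hw⟩ := mem_range_of_deriv_eq_zero k (deriv_unitsVal a)
  ext
  rw [AlgEquiv.smul_units_def, Units.coe_map, MonoidHom.coe_coe, ← hw, σ.commutes]

theorem cocycles₂_ext {z z' : cocycles₂ (constantsRep k K)}
    (h : ∀ p, unitsVal (z p) = unitsVal (z' p)) : z = z' :=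
  groupCohomology.cocycles₂_ext fun g g' => unitsVal_injective (h (g, g'))

theorem unitsVal_d₁₂ [ContainConstants k K] (e : Gal(K/k) → constantsRep k K)
    (p : Gal(K/k) × Gal(K/k)) :
    unitsVal ((d₁₂ (constantsRep k K)).hom e p) = mulCoboundary₂ (unitsVal ∘ e) p := by
  simp only [d₁₂_hom_apply, ρ_apply, unitsVal_add, unitsVal_sub, mulCoboundary₂,
    Function.comp_apply, smul_unitsVal]

theorem mem_coboundaries₂_iff [ContainConstants k K]
    (z : Gal(K/k) × Gal(K/k) → constantsRep k K) :
    z ∈ coboundaries₂ (constantsRep k K) ↔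
      ∃ e : Gal(K/k) → constantsRep k K, mulCoboundary₂ (unitsVal ∘ e) = unitsVal ∘ z := by
  constructor
  · rintro ⟨e, rfl⟩
    exact ⟨e, funext fun p => (unitsVal_d₁₂ e p).symm⟩
  · rintro ⟨e, he⟩
    exact ⟨e, funext fun p => unitsVal_injective ((unitsVal_d₁₂ e p).trans (congrFun he p))⟩

end constantsRep

section ConstantsCocycle

open constantsRep

variable {k K : Type} [Field k] [Field K] [Algebra k K] [Differential K] [ContainConstants k K]

def constantsCocycle (F : Gal(K/k) → Kˣ) (hF : ∀ p, ((mulCoboundary₂ F p : Kˣ) : K)′ = 0) :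
    cocycles₂ (constantsRep k K) :=
  ⟨fun p => ofUnits _ (hF p), (mem_cocycles₂_iff _).2 fun g h j => by
    apply unitsVal_injective
    have hfix := smul_unitsVal g (ofUnits _ (hF (h, j)))
    simp only [unitsVal_ofUnits] at hfix
    simp only [ρ_apply, unitsVal_add, unitsVal_ofUnits]
    rw [isMulCocycle₂_mulCoboundary₂ F g h j, hfix]⟩

@[simp]
theorem unitsVal_constantsCocycle (F : Gal(K/k) → Kˣ) (hF) (p : Gal(K/k) × Gal(K/k)) :
    unitsVal (constantsCocycle F hF p) = mulCoboundary₂ F p :=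
  unitsVal_ofUnits _ _

theorem constantsCocycle_eq_zero {F : Gal(K/k) → Kˣ} (hF) (hF₁ : IsMulCocycle₁ F) :
    constantsCocycle F hF = 0 :=
  constantsRep.cocycles₂_ext fun p => by
    simp [(mulCoboundary₂_eq_one_iff F).2 hF₁]

theorem constantsCocycle_mul {F F' : Gal(K/k) → Kˣ} (hF hF' hFF') :
    constantsCocycle (F * F') hFF' = constantsCocycle F hF + constantsCocycle F' hF' :=
  constantsRep.cocycles₂_ext fun p => by
    simp [mulCoboundary₂_mul]

theorem H2π_constantsCocycle_eq {F F' : Gal(K/k) → Kˣ} (hF hF')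
    (h : ∀ σ, logDeriv (F σ : K) = logDeriv (F' σ : K)) :
    H2π _ (constantsCocycle F hF) = H2π _ (constantsCocycle F' hF') := by
  have hconst : ∀ σ, ((F / F') σ : K)′ = 0 := fun σ => by
    rw [Pi.div_apply, Units.val_div_eq_div_val,
      deriv_div_eq_zero_iff (F σ).ne_zero (F' σ).ne_zero]
    exact h σ
  rw [H2π_eq_iff, constantsRep.mem_coboundaries₂_iff]
  refine ⟨fun σ => ofUnits _ (hconst σ), funext fun p => ?_⟩
  simp only [Function.comp_def, unitsVal_ofUnits, Pi.sub_apply, unitsVal_sub,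
    unitsVal_constantsCocycle]
  rw [mulCoboundary₂_div, Pi.div_apply]

end ConstantsCocycle

def IsLogDerivWitness {k K : Type} [Field k] [Field K] [Algebra k K] [Differential K] (u : K)
    (F : Gal(K/k) → Kˣ) : Prop :=
  ∀ σ, σ u - u = logDeriv (F σ : K)

namespace IsLogDerivWitness

variable {k K : Type} [Field k] [Field K] [Algebra k K] [Differential K]
  {u v : K} {F F' : Gal(K/k) → Kˣ}

theorem zero : IsLogDerivWitness (0 : K) (1 : Gal(K/k) → Kˣ) := fun σ => by
  simp

theorem add (hu : IsLogDerivWitness u F) (hv : IsLogDerivWitness v F') :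
    IsLogDerivWitness (u + v) (F * F') := fun σ => by
  rw [Pi.mul_apply, logDeriv_units_mul, ← hu σ, ← hv σ, map_add]
  ring

theorem neg (hu : IsLogDerivWitness u F) : IsLogDerivWitness (-u) F⁻¹ := fun σ => by
  rw [Pi.inv_apply, logDeriv_units_inv, ← hu σ, map_neg]
  ring

variable (hcomm : ∀ (σ : Gal(K/k)) (x : K), σ x′ = (σ x)′)
include hcomm

theorem algebraMap_add_logDeriv (w : k) (b : Kˣ) :
    IsLogDerivWitness (algebraMap k K w + logDeriv (b : K)) fun σ : Gal(K/k) => σ • b / b :=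
  fun σ => by
    rw [logDeriv_units_div, logDeriv_smul_units hcomm, map_add, AlgEquiv.commutes]
    ring

theorem deriv_mulCoboundary₂_eq_zero (hu : IsLogDerivWitness u F) (p : Gal(K/k) × Gal(K/k)) :
    ((mulCoboundary₂ F p : Kˣ) : K)′ = 0 := by
  rw [← logDeriv_eq_zero, logDeriv_mulCoboundary₂ hcomm, ← hu, ← hu, ← hu, map_sub,
    AlgEquiv.mul_apply]
  ring

end IsLogDerivWitness

section Subgroups

variable (k K : Type) [Field k] [Field K] [Algebra k K] [Differential K]

def invariantModLogDeriv : AddSubgroup K where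
  carrier := {u | ∃ F : Gal(K/k) → Kˣ, IsLogDerivWitness u F}
  zero_mem' := ⟨1, .zero⟩
  add_mem' := fun ⟨F, hF⟩ ⟨F', hF'⟩ => ⟨F * F', hF.add hF'⟩
  neg_mem' := fun ⟨F, hF⟩ => ⟨F⁻¹, hF.neg⟩

def baseAddLogDeriv : AddSubgroup K where
  carrier := {u | ∃ (w : k) (b : Kˣ), u = algebraMap k K w + logDeriv (b : K)}
  zero_mem' := ⟨0, 1, by simp⟩
  add_mem' := by
    rintro _ _ ⟨w, b, rfl⟩ ⟨w', b', rfl⟩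
    refine ⟨w + w', b * b', ?_⟩
    rw [map_add, logDeriv_units_mul]
    ring
  neg_mem' := by
    rintro _ ⟨w, b, rfl⟩
    refine ⟨-w, b⁻¹, ?_⟩
    rw [map_neg, logDeriv_units_inv]
    ring

variable {k K}

theorem mem_invariantModLogDeriv_iff {u : K} :
    u ∈ invariantModLogDeriv k K ↔ ∀ σ : Gal(K/k), ∃ F : Kˣ, σ u - u = logDeriv (F : K) :=
  (Classical.skolem (p := fun (σ : Gal(K/k)) (F : Kˣ) => σ u - u = logDeriv (F : K))).symm

theorem baseAddLogDeriv_le (hcomm : ∀ (σ : Gal(K/k)) (x : K), σ x′ = (σ x)′) :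
    baseAddLogDeriv k K ≤ invariantModLogDeriv k K := by
  rintro _ ⟨w, b, rfl⟩
  exact ⟨_, .algebraMap_add_logDeriv hcomm w b⟩

end Subgroups

namespace invariantModLogDeriv

open constantsRep

variable {k K : Type} [Field k] [Field K] [Algebra k K] [Differential K] [ContainConstants k K]
  (hcomm : ∀ (σ : Gal(K/k)) (x : K), σ x′ = (σ x)′)

noncomputable def toH2 : invariantModLogDeriv k K →+ H2 (constantsRep k K) :=
  AddMonoidHom.mk'
    (fun u => H2π _ (constantsCocycle _ (u.2.choose_spec.deriv_mulCoboundary₂_eq_zero hcomm)))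
    fun u v => by
      have huv := u.2.choose_spec.add v.2.choose_spec
      rw [← map_add, ← constantsCocycle_mul _ _ (huv.deriv_mulCoboundary₂_eq_zero hcomm)]
      exact H2π_constantsCocycle_eq _ _ fun σ => ((u + v).2.choose_spec σ).symm.trans (huv σ)

theorem toH2_apply {u : invariantModLogDeriv k K} {F : Gal(K/k) → Kˣ}
    (hu : IsLogDerivWitness (u : K) F) :
    toH2 hcomm u = H2π _ (constantsCocycle F (hu.deriv_mulCoboundary₂_eq_zero hcomm)) :=
  H2π_constantsCocycle_eq _ _ fun σ => (u.2.choose_spec σ).symm.trans (hu σ)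

variable [FiniteDimensional k K] [IsGalois k K]
include hcomm

theorem mem_baseAddLogDeriv_of_H2π_eq_zero {u : K} {F : Gal(K/k) → Kˣ}
    (hu : IsLogDerivWitness u F) (hF) (h0 : H2π _ (constantsCocycle F hF) = 0) :
    u ∈ baseAddLogDeriv k K := by
  obtain ⟨e, he⟩ := (constantsRep.mem_coboundaries₂_iff _).1 ((H2π_eq_zero_iff _).1 h0)
  have hcoc : IsMulCocycle₁ (F / (unitsVal ∘ e)) := by
    rw [← mulCoboundary₂_eq_one_iff, mulCoboundary₂_div, he]
    funext p
    simp
  obtain ⟨β, hβ⟩ := isMulCoboundary₁_of_isMulCocycle₁_of_aut_to_units _ hcoc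
  have hlogDeriv (σ : Gal(K/k)) :
      logDeriv (F σ : K) = σ (logDeriv (β : K)) - logDeriv (β : K) := by
    rw [← logDeriv_smul_units hcomm, ← logDeriv_units_div, hβ σ, Pi.div_apply,
      logDeriv_units_div, Function.comp_apply, (logDeriv_eq_zero _).2 (deriv_unitsVal _),
      sub_zero]
  obtain ⟨w, hw⟩ := (IsGalois.mem_range_algebraMap_iff_fixed (u - logDeriv (β : K))).2 fun σ => by
    rw [map_sub]
    linear_combination hu σ + hlogDeriv σ
  exact ⟨w, β, by rw [hw]; ring⟩

theorem exists_isLogDerivWitness_constantsCocycle_eq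
    (hH2 : ∀ c : Gal(K/k) × Gal(K/k) → Kˣ, IsMulCocycle₂ c → IsMulCoboundary₂ c)
    (z : cocycles₂ (constantsRep k K)) :
    ∃ (u : K) (F : Gal(K/k) → Kˣ) (hu : IsLogDerivWitness u F),
      constantsCocycle F (hu.deriv_mulCoboundary₂_eq_zero hcomm) = z := by
  have hz : IsMulCocycle₂ (unitsVal ∘ z) := fun g h j => by
    simpa only [Function.comp_apply, smul_unitsVal, unitsVal_add, ρ_apply] using
      congrArg unitsVal ((mem_cocycles₂_iff z).1 z.2 g h j)
  obtain ⟨F, hF⟩ := hH2 _ hz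
  have hcoc : IsCocycle₁ fun σ => logDeriv (F σ : K) := fun g h => by
    have := logDeriv_mulCoboundary₂ hcomm F (g, h)
    rw [show mulCoboundary₂ F (g, h) = _ from hF g h, Function.comp_apply,
      (logDeriv_eq_zero _).2 (deriv_unitsVal _)] at this
    rw [AlgEquiv.smul_def]
    linear_combination this
  obtain ⟨u, hu⟩ := isCoboundary₁_of_isCocycle₁_of_aut _ hcoc
  refine ⟨u, F, hu, constantsRep.cocycles₂_ext fun p => ?_⟩
  rw [unitsVal_constantsCocycle]
  exact hF p.1 p.2

theorem ker_toH2 :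
    (toH2 hcomm).ker = (baseAddLogDeriv k K).addSubgroupOf (invariantModLogDeriv k K) := by
  ext u
  obtain ⟨F, hF⟩ := u.2
  rw [AddMonoidHom.mem_ker, AddSubgroup.mem_addSubgroupOf, toH2_apply hcomm hF]
  refine ⟨mem_baseAddLogDeriv_of_H2π_eq_zero hcomm hF _, ?_⟩
  rintro ⟨w, b, hwb⟩
  have hb := IsLogDerivWitness.algebraMap_add_logDeriv hcomm w b
  rw [← hwb] at hb
  rw [H2π_constantsCocycle_eq _ (hb.deriv_mulCoboundary₂_eq_zero hcomm)
    fun σ => (hF σ).symm.trans (hb σ), constantsCocycle_eq_zero _ (isMulCocycle₁_smul_div b),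
    map_zero]

theorem toH2_surjective
    (hH2 : ∀ c : Gal(K/k) × Gal(K/k) → Kˣ, IsMulCocycle₂ c → IsMulCoboundary₂ c) :
    Function.Surjective (toH2 hcomm) := fun x => by
  refine H2_induction_on x fun z => ?_
  obtain ⟨u, F, hu, rfl⟩ := exists_isLogDerivWitness_constantsCocycle_eq hcomm hH2 z
  exact ⟨⟨u, F, hu⟩, toH2_apply hcomm hu⟩

end invariantModLogDeriv

theorem stmt4_general (k K : Type) [Field k] [Field K] [Algebra k K]
    [FiniteDimensional k K] [IsGalois k K]
    (D : K → K)
    (hDadd : ∀ x y : K, D (x + y) = D x + D y)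
    (hDmul : ∀ x y : K, D (x * y) = x * D y + D x * y)
    (hcomm : ∀ (σ : K ≃ₐ[k] K) (x : K), σ (D x) = D (σ x))
    (hconst : ∀ x : K, D x = 0 → x ∈ (algebraMap k K).range)
    (hH2Ktriv : ∀ c : (K ≃ₐ[k] K) → (K ≃ₐ[k] K) → Kˣ,
      (∀ σ τ ρ : K ≃ₐ[k] K,
          (c σ τ : K) * (c (σ * τ) ρ : K) = σ (c τ ρ : K) * (c σ (τ * ρ) : K)) →
      ∃ f : (K ≃ₐ[k] K) → Kˣ,
        ∀ σ τ : K ≃ₐ[k] K, (c σ τ : K) = (f σ : K) * σ (f τ : K) * ((f (σ * τ) : K))⁻¹) :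
    ∃ (H h : AddSubgroup K),
      (H : Set K) = {u : K | ∀ σ : K ≃ₐ[k] K, ∃ F : Kˣ, σ u - u = D (F : K) / (F : K)} ∧
      (h : Set K) = {u : K | ∃ (w : k) (F : Kˣ), u = algebraMap k K w + D (F : K) / (F : K)} ∧
      h ≤ H ∧
      Nonempty ((H ⧸ h.addSubgroupOf H) ≃+
        groupCohomology.H2 (Rep.trivial ℤ (K ≃ₐ[k] K)
          (Additive (↥(constSubfield K D hDadd hDmul))ˣ))) := by
  let _ : Differential K := ⟨Derivation.mk' (AddMonoidHom.mk' D hDadd).toIntLinearMap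
    fun x y => (hDmul x y).trans (by rw [mul_comm (D x)]; rfl)⟩
  have _ : ContainConstants k K := ⟨hconst _⟩
  have hH2 (c : Gal(K/k) × Gal(K/k) → Kˣ) (hc : IsMulCocycle₂ c) : IsMulCoboundary₂ c :=
    (isMulCoboundary₂_iff_galois c).2 (hH2Ktriv _ ((isMulCocycle₂_iff_galois c).1 hc))
  refine ⟨invariantModLogDeriv k K, baseAddLogDeriv k K,
    Set.ext fun _ => mem_invariantModLogDeriv_iff, rfl, baseAddLogDeriv_le hcomm, ?_⟩
  exact ⟨(QuotientAddGroup.quotientAddEquivOfEq (invariantModLogDeriv.ker_toH2 hcomm).symm).trans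
    (QuotientAddGroup.quotientKerEquivOfSurjective _
      (invariantModLogDeriv.toH2_surjective hcomm hH2))⟩

/-- paper's Lemma 4.1.  Let `K/k` be a finite Galois extension of
differential fields (the Galois group commuting with the derivation `D`, the field of
constants `C` of `K` contained in `k`, `char K = 0`).  Assume every 2-cocycle of
`G = Gal(K/k)` with values in `Kˣ` is a coboundary.  Let
`H := {u ∈ K : ∀ σ ∈ G, ∃ F ∈ Kˣ, σ(u) − u = logD F}` and
`h := {w + logD F : w ∈ k, F ∈ Kˣ}`.  Then `H` and `h` are additive subgroups of `K`
with `h ⊆ H`, and `H/h ≅ H²(G, Cˣ)` as abelian groups (trivial `G`-action on `Cˣ`). -/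
theorem stmt4 (k K : Type) [Field k] [Field K] [Algebra k K] [CharZero K]
    [FiniteDimensional k K] [IsGalois k K]
    (D : K → K)
    (hDadd : ∀ x y : K, D (x + y) = D x + D y)
    (hDmul : ∀ x y : K, D (x * y) = x * D y + D x * y)
    (hcomm : ∀ (σ : K ≃ₐ[k] K) (x : K), σ (D x) = D (σ x))
    (hconst : ∀ x : K, D x = 0 → x ∈ (algebraMap k K).range)
    (hH2Ktriv : ∀ c : (K ≃ₐ[k] K) → (K ≃ₐ[k] K) → Kˣ,
      (∀ σ τ ρ : K ≃ₐ[k] K,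
          (c σ τ : K) * (c (σ * τ) ρ : K) = σ (c τ ρ : K) * (c σ (τ * ρ) : K)) →
      ∃ f : (K ≃ₐ[k] K) → Kˣ,
        ∀ σ τ : K ≃ₐ[k] K, (c σ τ : K) = (f σ : K) * σ (f τ : K) * ((f (σ * τ) : K))⁻¹) :
    ∃ (H h : AddSubgroup K),
      (H : Set K) = {u : K | ∀ σ : K ≃ₐ[k] K, ∃ F : Kˣ, σ u - u = D (F : K) / (F : K)} ∧
      (h : Set K) = {u : K | ∃ (w : k) (F : Kˣ), u = algebraMap k K w + D (F : K) / (F : K)} ∧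
      h ≤ H ∧
      Nonempty ((H ⧸ h.addSubgroupOf H) ≃+
        groupCohomology.H2 (Rep.trivial ℤ (K ≃ₐ[k] K)
          (Additive (↥(constSubfield K D hDadd hDmul))ˣ))) :=
  stmt4_general k K D hDadd hDmul hcomm hconst hH2Ktriv
end

section
/- Let K be a differential field of characteristic 0 with derivation D, let k ⊆ K be a subfield with K/k a finite Galois extension with group G = Gal(K/k), and suppose every σ ∈ G commutes with D. Let s be a positive integer, let u ∈ K, let f : G → Kˣ satisfy σ(u) − u = logD f(σ) for all σ ∈ G, let d : G → Kˣ take values in the constants of K (D(d(σ)) = 0 for all σ), and let F ∈ Kˣ satisfy f(σ)^s·d(σ)⁻¹ = σ(F)/F for all σ ∈ G. Then the element u − (1/s)·logD F is fixed by every σ ∈ G and hence lies in k. -/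
/-!
Applying the logarithmic derivative to `σ F / F = f(σ)^s d(σ)⁻¹`, and using that `σ` commutes with
`D` while `d(σ)` is a constant, gives `σ (logD F) = s · logD f(σ) + logD F`. Together with
`σ u = u + logD f(σ)` the two contributions of `logD f(σ)` cancel in `u - (1/s) logD F`, which is
therefore fixed by the whole Galois group and so lies in `k`.
-/

namespace Derivation

def ofAddLeibniz {A : Type*} [CommRing A] (D : A → A) (hadd : ∀ x y, D (x + y) = D x + D y)
    (hmul : ∀ x y, D (x * y) = x * D y + D x * y) : Derivation ℤ A A :=
  mk' (AddMonoidHom.mk' D hadd).toIntLinearMap fun a b => by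
    simp [hmul, smul_eq_mul, mul_comm]

section LogDeriv

variable {R K : Type*} [CommRing R] [Field K] [Algebra R K] (D : Derivation R K K)

/-- Note the junk value `logDeriv 0 = 0`: it lets `logDeriv_inv` and `logDeriv_pow` hold without `x ≠ 0`. -/
def logDeriv (x : K) : K := D x / x

theorem logDeriv_mul {x y : K} (hx : x ≠ 0) (hy : y ≠ 0) :
    D.logDeriv (x * y) = D.logDeriv x + D.logDeriv y := by
  simp only [logDeriv, leibniz, smul_eq_mul]
  field_simp
  ring

theorem logDeriv_inv (x : K) : D.logDeriv x⁻¹ = -D.logDeriv x := by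
  rcases eq_or_ne x 0 with rfl | hx
  · simp [logDeriv]
  · simp only [logDeriv, leibniz_inv, smul_eq_mul]
    field_simp

theorem logDeriv_pow (x : K) (n : ℕ) : D.logDeriv (x ^ n) = n * D.logDeriv x := by
  rcases eq_or_ne x 0 with rfl | hx
  · rcases n with _ | n <;> simp [logDeriv]
  · rcases n with _ | n
    · simp [logDeriv]
    · simp only [logDeriv, leibniz_pow, nsmul_eq_mul, smul_eq_mul, Nat.add_sub_cancel]
      field_simp
      ring

theorem logDeriv_div_s6 {x y : K} (hx : x ≠ 0) (hy : y ≠ 0) :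
    D.logDeriv (x / y) = D.logDeriv x - D.logDeriv y := by
  rw [div_eq_mul_inv, D.logDeriv_mul hx (inv_ne_zero hy), logDeriv_inv, sub_eq_add_neg]

theorem logDeriv_eq_zero_of_map_eq_zero {x : K} (hx : D x = 0) : D.logDeriv x = 0 := by
  simp [logDeriv, hx]

theorem map_logDeriv {F : Type*} [FunLike F K K] [RingHomClass F K K] (σ : F)
    (hσ : ∀ x, σ (D x) = D (σ x)) (x : K) : σ (D.logDeriv x) = D.logDeriv (σ x) := by
  rw [logDeriv, map_div₀, hσ, logDeriv]

theorem map_logDeriv_of_pow_mul_inv_eq_map_div {F : Type*} [FunLike F K K]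
    [RingHomClass F K K] (σ : F) (hσ : ∀ x, σ (D x) = D (σ x)) {a c x : K} (n : ℕ)
    (hc : D c = 0) (hx : x ≠ 0) (hxσ : a ^ n * c⁻¹ = σ x / x) :
    σ (D.logDeriv x) = n * D.logDeriv a + D.logDeriv x := by
  have hquot : σ x / x ≠ 0 := div_ne_zero ((map_ne_zero σ).mpr hx) hx
  rw [← hxσ, mul_ne_zero_iff] at hquot
  have := congrArg D.logDeriv hxσ
  rw [D.logDeriv_div_s6 ((map_ne_zero σ).mpr hx) hx, D.logDeriv_mul hquot.1 hquot.2, logDeriv_pow,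
    logDeriv_inv, D.logDeriv_eq_zero_of_map_eq_zero hc, neg_zero, add_zero] at this
  rw [D.map_logDeriv σ hσ, this, sub_add_cancel]

theorem map_sub_div_mul_logDeriv_eq {F : Type*} [FunLike F K K]
    [RingHomClass F K K] (σ : F) (hσ : ∀ x, σ (D x) = D (σ x)) {u a c x : K} {n : ℕ}
    (hn : (n : K) ≠ 0) (hc : D c = 0) (hx : x ≠ 0) (hu : σ u - u = D.logDeriv a)
    (hxσ : a ^ n * c⁻¹ = σ x / x) :
    σ (u - 1 / n * D.logDeriv x) = u - 1 / n * D.logDeriv x := by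
  rw [map_sub, map_mul, map_div₀, map_one, _root_.map_natCast,
    D.map_logDeriv_of_pow_mul_inv_eq_map_div σ hσ n hc hx hxσ, eq_add_of_sub_eq' hu]
  field_simp
  ring

end LogDeriv

end Derivation

theorem stmt6_general (k K : Type*) [Field k] [Field K] [Algebra k K] [CharZero K]
    [IsGalois k K]
    (D : K → K)
    (hDadd : ∀ x y : K, D (x + y) = D x + D y)
    (hDmul : ∀ x y : K, D (x * y) = x * D y + D x * y)
    (hcomm : ∀ (σ : K ≃ₐ[k] K) (x : K), σ (D x) = D (σ x))
    (s : ℕ) (hs : 0 < s) (u : K)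
    (f : (K ≃ₐ[k] K) → Kˣ)
    (hf : ∀ σ : K ≃ₐ[k] K, σ u - u = D (f σ : K) / (f σ : K))
    (d : (K ≃ₐ[k] K) → Kˣ)
    (hdconst : ∀ σ : K ≃ₐ[k] K, D (d σ : K) = 0)
    (F : Kˣ)
    (hF : ∀ σ : K ≃ₐ[k] K, (f σ : K) ^ s * ((d σ : K))⁻¹ = σ (F : K) / (F : K)) :
    (∀ σ : K ≃ₐ[k] K, σ (u - (1 / (s : K)) * (D (F : K) / (F : K))) =
        u - (1 / (s : K)) * (D (F : K) / (F : K))) ∧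
      u - (1 / (s : K)) * (D (F : K) / (F : K)) ∈ (algebraMap k K).range := by
  have hfixed (σ : K ≃ₐ[k] K) : σ (u - (1 / (s : K)) * (D (F : K) / (F : K))) =
      u - (1 / (s : K)) * (D (F : K) / (F : K)) :=
    (Derivation.ofAddLeibniz D hDadd hDmul).map_sub_div_mul_logDeriv_eq σ (hcomm σ)
      (Nat.cast_ne_zero.mpr hs.ne') (hdconst σ) F.ne_zero (hf σ) (hF σ)
  exact ⟨hfixed, (InfiniteGalois.mem_range_algebraMap_iff_fixed _).mpr hfixed⟩

/-- Let `K` be a differential field of characteristic 0 with derivation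
`D`, `k ⊆ K` a subfield with `K/k` finite Galois with group `G`, each `σ ∈ G`
commuting with `D`.  Let `s ≥ 1`, `u ∈ K`, `f : G → Kˣ` with `σ(u) − u = logD f(σ)`,
`d : G → Kˣ` constant-valued, and `F ∈ Kˣ` with `f(σ)^s·d(σ)⁻¹ = σ(F)/F` for all `σ`.
Then `u − (1/s)·logD F` is fixed by every `σ ∈ G`, hence lies in `k`. -/
theorem stmt6 (k K : Type*) [Field k] [Field K] [Algebra k K] [CharZero K]
    [FiniteDimensional k K] [IsGalois k K]
    (D : K → K)
    (hDadd : ∀ x y : K, D (x + y) = D x + D y)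
    (hDmul : ∀ x y : K, D (x * y) = x * D y + D x * y)
    (hcomm : ∀ (σ : K ≃ₐ[k] K) (x : K), σ (D x) = D (σ x))
    (s : ℕ) (hs : 0 < s) (u : K)
    (f : (K ≃ₐ[k] K) → Kˣ)
    (hf : ∀ σ : K ≃ₐ[k] K, σ u - u = D (f σ : K) / (f σ : K))
    (d : (K ≃ₐ[k] K) → Kˣ)
    (hdconst : ∀ σ : K ≃ₐ[k] K, D (d σ : K) = 0)
    (F : Kˣ)
    (hF : ∀ σ : K ≃ₐ[k] K, (f σ : K) ^ s * ((d σ : K))⁻¹ = σ (F : K) / (F : K)) :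
    (∀ σ : K ≃ₐ[k] K, σ (u - (1 / (s : K)) * (D (F : K) / (F : K))) =
        u - (1 / (s : K)) * (D (F : K) / (F : K))) ∧
      u - (1 / (s : K)) * (D (F : K) / (F : K)) ∈ (algebraMap k K).range :=
  stmt6_general k K D hDadd hDmul hcomm s hs u f hf d hdconst F hF
end

section
/- Let K⁺ be a differential field with derivation D, let k ⊆ K⁺ be a subfield with K⁺/k a finite Galois extension with group G⁺ = Gal(K⁺/k), suppose every element of G⁺ commutes with D, and suppose every constant of K⁺ lies in k. Let Z be a subgroup of the center of G⁺, let K := (K⁺)^Z be its fixed field (so K/k is Galois with group G = Gal(K/k), and the restriction map res : G⁺ → G is a surjective group homomorphism with kernel Z). Let F ∈ (K⁺)ˣ be such that logD F is fixed by every element of Z. Then: (i) for each z ∈ Z the element χ(z) := z(F)/F is a constant, and χ : Z → Cˣ is a group homomorphism into the group of nonzero constants; (ii) for any set-theoretic section φ : G → G⁺ of res (i.e., res(φ(σ)) = σ for all σ), each f(σ) := φ(σ)(F)/F is fixed by every element of Z and hence lies in Kˣ; (iii) for all σ,τ ∈ G the element d(σ,τ) := φ(στ)·(φ(σ)·φ(τ))⁻¹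 lies in Z, and f(στ) = χ(d(σ,τ))·f(σ)·σ(f(τ)). -/
/-- field-theoretic content of the paper's Lemma 3.2.  Let `K⁺/k` be a
finite Galois extension of differential fields (Galois group `G⁺` commuting with the
derivation `D`, constants of `K⁺` contained in `k`), `Z` a subgroup of the center of
`G⁺`, and `K := (K⁺)^Z` the fixed field, with Galois group `G = Gal(K/k)`.  Let
`F ∈ (K⁺)ˣ` with `logD F` fixed by `Z`.  Then
(i) each `χ(z) := z(F)/F` (`z ∈ Z`) is a constant and `χ` is multiplicative on `Z`;
(ii) for any set-theoretic section `φ : G → G⁺` of the restriction map, each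
`f(σ) := φ(σ)(F)/F` is fixed by `Z`, hence lies in `K`;
(iii) `d(σ,τ) := φ(στ)·(φ(σ)·φ(τ))⁻¹ ∈ Z` and `f(στ) = χ(d(σ,τ))·f(σ)·σ(f(τ))`. -/
theorem stmt7 (k Kp : Type*) [Field k] [Field Kp] [Algebra k Kp]
    [FiniteDimensional k Kp] [IsGalois k Kp]
    (D : Kp → Kp)
    (hDadd : ∀ x y : Kp, D (x + y) = D x + D y)
    (hDmul : ∀ x y : Kp, D (x * y) = x * D y + D x * y)
    (hcomm : ∀ (σ : Kp ≃ₐ[k] Kp) (x : Kp), σ (D x) = D (σ x))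
    (hconst : ∀ x : Kp, D x = 0 → x ∈ (algebraMap k Kp).range)
    (Z : Subgroup (Kp ≃ₐ[k] Kp)) (hZ : Z ≤ Subgroup.center (Kp ≃ₐ[k] Kp))
    (F : Kpˣ)
    (hF : ∀ z : Kp ≃ₐ[k] Kp, z ∈ Z →
      z (D (F : Kp) / (F : Kp)) = D (F : Kp) / (F : Kp))
    -- `φ` is a set-theoretic section of the restriction map `G⁺ → G = Gal(K/k)`,
    -- i.e. `φ σ` is an element of `G⁺` whose restriction to `K = (K⁺)^Z` is `σ`:
    (φ : ((IntermediateField.fixedField Z) ≃ₐ[k] (IntermediateField.fixedField Z)) →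
      (Kp ≃ₐ[k] Kp))
    (hφ : ∀ (σ : (IntermediateField.fixedField Z) ≃ₐ[k] (IntermediateField.fixedField Z))
        (x : IntermediateField.fixedField Z), φ σ (x : Kp) = ((σ x : _) : Kp)) :
    -- (i)
    (∀ z : Kp ≃ₐ[k] Kp, z ∈ Z → D (z (F : Kp) / (F : Kp)) = 0) ∧
    (∀ z w : Kp ≃ₐ[k] Kp, z ∈ Z → w ∈ Z →
      (z * w) (F : Kp) / (F : Kp) = (z (F : Kp) / (F : Kp)) * (w (F : Kp) / (F : Kp))) ∧
    -- (ii)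
    (∀ (σ : (IntermediateField.fixedField Z) ≃ₐ[k] (IntermediateField.fixedField Z)),
      ∀ z : Kp ≃ₐ[k] Kp, z ∈ Z →
        z (φ σ (F : Kp) / (F : Kp)) = φ σ (F : Kp) / (F : Kp)) ∧
    (∀ (σ : (IntermediateField.fixedField Z) ≃ₐ[k] (IntermediateField.fixedField Z)),
      φ σ (F : Kp) / (F : Kp) ∈ IntermediateField.fixedField Z) ∧
    -- (iii)
    (∀ (σ τ : (IntermediateField.fixedField Z) ≃ₐ[k] (IntermediateField.fixedField Z)),
      φ (σ * τ) * (φ σ * φ τ)⁻¹ ∈ Z) ∧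
    (∀ (σ τ : (IntermediateField.fixedField Z) ≃ₐ[k] (IntermediateField.fixedField Z)),
      φ (σ * τ) (F : Kp) / (F : Kp) =
        ((φ (σ * τ) * (φ σ * φ τ)⁻¹) (F : Kp) / (F : Kp)) *
          (φ σ (F : Kp) / (F : Kp)) * (φ σ (φ τ (F : Kp) / (F : Kp)))) := by

  have hF0 : (F : Kp) ≠ 0 := F.ne_zero
  -- (i) first part: constants
  have hi1 : ∀ z : Kp ≃ₐ[k] Kp, z ∈ Z → D (z (F : Kp) / (F : Kp)) = 0 := by
    intro z hz
    have hz0 : z (F : Kp) ≠ 0 := fun h => hF0 (by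
      have := z.injective (h.trans (map_zero z).symm); exact this)
    have h1 : D (z F) / z F = D (F : Kp) / F := by
      have h := hF z hz
      rwa [map_div₀, hcomm] at h
    have hDzF : D (z (F : Kp)) = (D (F : Kp) / F) * z F := by
      field_simp at h1 ⊢
      linear_combination h1
    set g := z (F : Kp) / F with hg
    have hgF : g * F = z (F : Kp) := div_mul_cancel₀ _ hF0
    have h2 : g * D (F : Kp) + D g * F = g * D (F : Kp) := by
      calc g * D (F : Kp) + D g * F = D (g * F) := (hDmul g F).symm
        _ = D (z (F : Kp)) := by rw [hgF]
        _ = (D (F : Kp) / F) * z F := hDzF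
        _ = (D (F : Kp) / F) * (g * F) := by rw [hgF]
        _ = g * D (F : Kp) := by field_simp
    have h3 : D g * F = 0 := by linear_combination h2
    exact (mul_eq_zero.mp h3).resolve_right hF0
  -- constants are fixed by every automorphism
  have hfix : ∀ c : Kp, D c = 0 → ∀ e : Kp ≃ₐ[k] Kp, e c = c := by
    intro c hc e
    obtain ⟨a, ha⟩ := hconst c hc
    rw [← ha, AlgEquiv.commutes]
  -- (i) second part: multiplicativity
  have hi2 : ∀ z w : Kp ≃ₐ[k] Kp, z ∈ Z → w ∈ Z →
      (z * w) (F : Kp) / F = (z (F : Kp) / F) * (w (F : Kp) / F) := by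
    intro z w hz hw
    have hwc : z (w (F : Kp) / F) = w (F : Kp) / F := hfix _ (hi1 w hw) z
    calc (z * w) (F : Kp) / F = z (w (F : Kp)) / F := rfl
      _ = z ((w (F : Kp) / F) * F) / F := by rw [div_mul_cancel₀ _ hF0]
      _ = ((w (F : Kp) / F) * z F) / F := by rw [map_mul, hwc]
      _ = (z (F : Kp) / F) * (w (F : Kp) / F) := by ring
  -- (ii) first part
  have hii1 : ∀ (σ : (IntermediateField.fixedField Z) ≃ₐ[k] (IntermediateField.fixedField Z)),
      ∀ z : Kp ≃ₐ[k] Kp, z ∈ Z →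
        z (φ σ (F : Kp) / F) = φ σ (F : Kp) / F := by
    intro σ z hz
    have hz0 : z (F : Kp) ≠ 0 := fun h => hF0 (z.injective (h.trans (map_zero z).symm))
    have hcen : z * φ σ = φ σ * z := (Subgroup.mem_center_iff.mp (hZ hz) (φ σ)).symm
    have hswap : z (φ σ (F : Kp)) = φ σ (z F) := by
      have : (z * φ σ) (F : Kp) = (φ σ * z) (F : Kp) := by rw [hcen]
      exact this
    have hczF : φ σ (z (F : Kp) / F) = z (F : Kp) / F := hfix _ (hi1 z hz) (φ σ)
    have hne : z (F : Kp) / F ≠ 0 := div_ne_zero hz0 hF0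
    calc z (φ σ (F : Kp) / F) = z (φ σ (F : Kp)) / z F := map_div₀ z _ _
      _ = φ σ (z (F : Kp)) / z F := by rw [hswap]
      _ = φ σ ((z (F : Kp) / F) * F) / ((z (F : Kp) / F) * F) := by
          rw [div_mul_cancel₀ _ hF0]
      _ = ((z (F : Kp) / F) * φ σ F) / ((z (F : Kp) / F) * F) := by rw [map_mul, hczF]
      _ = φ σ (F : Kp) / F := mul_div_mul_left _ _ hne
  -- (ii) second part
  have hii2 : ∀ (σ : (IntermediateField.fixedField Z) ≃ₐ[k] (IntermediateField.fixedField Z)),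
      φ σ (F : Kp) / F ∈ IntermediateField.fixedField Z := by
    intro σ g
    exact hii1 σ g.1 g.2
  -- (iii) first part
  have hiii1 : ∀ (σ τ : (IntermediateField.fixedField Z) ≃ₐ[k] (IntermediateField.fixedField Z)),
      φ (σ * τ) * (φ σ * φ τ)⁻¹ ∈ Z := by
    intro σ τ
    suffices h : φ (σ * τ) * (φ σ * φ τ)⁻¹ ∈
        IntermediateField.fixingSubgroup (IntermediateField.fixedField Z) by
      rwa [IntermediateField.fixingSubgroup_fixedField Z] at h
    rw [IntermediateField.mem_fixingSubgroup_iff]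
    intro x hx
    set x' : IntermediateField.fixedField Z := (σ * τ).symm ⟨x, hx⟩ with hx'
    have h1 : (φ σ * φ τ) (x' : Kp) = x := by
      show φ σ (φ τ (x' : Kp)) = x
      rw [hφ τ x', hφ σ (τ x')]
      have : σ (τ x') = (σ * τ) x' := rfl
      rw [this, hx', AlgEquiv.apply_symm_apply]
    have h2 : φ (σ * τ) (x' : Kp) = x := by
      rw [hφ (σ * τ) x', hx', AlgEquiv.apply_symm_apply]
    have hinv : (φ σ * φ τ)⁻¹ x = (x' : Kp) := by
      have : (φ σ * φ τ).symm x = (x' : Kp) := (φ σ * φ τ).symm_apply_eq.mpr h1.symm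
      rw [← this]; rfl
    show φ (σ * τ) ((φ σ * φ τ)⁻¹ x) = x
    rw [hinv, h2]
  refine ⟨hi1, hi2, hii1, hii2, hiii1, ?_⟩
  -- (iii) second part : cocycle identity
  intro σ τ
  set z := φ (σ * τ) * (φ σ * φ τ)⁻¹ with hzdef
  have hzZ : z ∈ Z := hiii1 σ τ
  have hz0 : z (F : Kp) ≠ 0 := fun h => hF0 (z.injective (h.trans (map_zero z).symm))
  have hσ0 : φ σ (F : Kp) ≠ 0 := fun h => hF0 ((φ σ).injective (h.trans (map_zero _).symm))
  have hτ0 : φ τ (F : Kp) ≠ 0 := fun h => hF0 ((φ τ).injective (h.trans (map_zero _).symm))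
  have key : φ (σ * τ) (F : Kp) = z (φ σ (φ τ (F : Kp))) := by
    have h : φ (σ * τ) = z * (φ σ * φ τ) := by rw [hzdef]; group
    rw [h]; rfl
  -- z fixes φ σ (φ τ F / F)
  have hcen : z * φ σ = φ σ * z := (Subgroup.mem_center_iff.mp (hZ hzZ) (φ σ)).symm
  have hfix1 : z (φ σ (φ τ (F : Kp) / F)) = φ σ (φ τ (F : Kp) / F) := by
    have hswap : z (φ σ (φ τ (F : Kp) / F)) = φ σ (z (φ τ (F : Kp) / F)) := by
      have : (z * φ σ) (φ τ (F : Kp) / F) = (φ σ * z) (φ τ (F : Kp) / F) := by rw [hcen]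
      exact this
    rw [hswap, hii1 τ z hzZ]
  have hfix2 : z (φ σ (F : Kp) / F) = φ σ (F : Kp) / F := hii1 σ z hzZ
  have hratio : φ σ (φ τ (F : Kp)) =
      φ σ (φ τ (F : Kp) / F) * (φ σ (F : Kp) / F) * F := by
    rw [map_div₀]
    field_simp
  have hBC : z (φ σ (φ τ (F : Kp))) = (z (F : Kp) / F) * φ σ (φ τ (F : Kp)) := by
    rw [hratio, map_mul, map_mul, hfix1, hfix2]
    field_simp
  rw [key, hBC, map_div₀]
  field_simp
end

section
/- Let K := ℂ(t) be the field of rational functions over ℂ, equipped with the unique ℂ-derivation D satisfying D(t) = t³/(2(t⁴ − 1)) (equivalently, D(t² + t⁻²) = 1, so D is d/dz for z := t² + t⁻²). Let a and b be the ℂ-automorphisms of K with a(t) = −t and b(t) = 1/t, and set u := 1/(4(t² − t⁻²)) ∈ K. Then: (i) a(u) = u; (ii) b(u) − u = D(t⁻¹)/t⁻¹; and (iii) u = (1/2)·D(t)/t. -/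
/-!
Write `x` for `t`. Since `x² - x⁻² = (x⁴ - 1)/x²`, we have `u = x²/(4(x⁴ - 1)) = ½·D(x)/x`, which is (iii).
The expression `u` is invariant under `x ↦ -x` and changes sign under `x ↦ x⁻¹`; as `a` and `b`
are field automorphisms this gives (i) and `b u - u = -2u = -D(x)/x`, which is the logarithmic
derivative of `x⁻¹`, giving (ii).
-/

section InvFourSqSub

variable {K L : Type*} [Field K] [Field L]

def invFourSqSub (x : K) : K := 1 / (4 * (x ^ 2 - x⁻¹ ^ 2))

theorem map_invFourSqSub {F : Type*} [FunLike F K L] [RingHomClass F K L] (σ : F) (x : K) :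
    σ (invFourSqSub x) = invFourSqSub (σ x) := by
  simp only [invFourSqSub, map_div₀, map_one, map_mul, map_ofNat, map_sub, map_pow, map_inv₀]

theorem invFourSqSub_neg (x : K) : invFourSqSub (-x) = invFourSqSub x := by
  simp [invFourSqSub]

theorem invFourSqSub_inv (x : K) : invFourSqSub x⁻¹ = -invFourSqSub x := by
  rw [invFourSqSub, invFourSqSub, inv_inv, ← neg_sub, mul_neg, div_neg]

theorem invFourSqSub_eq_half_div {x : K} (hx : x ≠ 0) :
    invFourSqSub x = 1 / 2 * (x ^ 3 / (2 * (x ^ 4 - 1)) / x) := by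
  unfold invFourSqSub
  field_simp
  ring

end InvFourSqSub

theorem Derivation.map_inv_div_inv {R K : Type*} [CommRing R] [Field K] [Algebra R K]
    (D : Derivation R K K) (x : K) : D x⁻¹ / x⁻¹ = -(D x / x) := by
  rcases eq_or_ne x 0 with rfl | hx
  · simp
  rw [D.leibniz_inv, smul_eq_mul]
  field_simp

/-- computations of the paper's Example 4.3.  Let `K = ℂ(t)` with the
unique `ℂ`-derivation `D` satisfying `D t = t³/(2(t⁴ − 1))` (so `D = d/dz` for
`z = t² + t⁻²`), let `a, b` be the `ℂ`-automorphisms with `a t = −t`, `b t = 1/t`,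
and set `u := 1/(4(t² − t⁻²))`.  Then (i) `a u = u`; (ii) `b u − u = D(t⁻¹)/t⁻¹`;
(iii) `u = (1/2)·D t / t`. -/
theorem stmt12 (D : Derivation ℂ (RatFunc ℂ) (RatFunc ℂ))
    (hD : D RatFunc.X = RatFunc.X ^ 3 / (2 * (RatFunc.X ^ 4 - 1)))
    (a b : RatFunc ℂ ≃ₐ[ℂ] RatFunc ℂ)
    (ha : a RatFunc.X = -RatFunc.X) (hb : b RatFunc.X = (RatFunc.X)⁻¹)
    (u : RatFunc ℂ)
    (hu : u = 1 / (4 * (RatFunc.X ^ 2 - (RatFunc.X)⁻¹ ^ 2))) :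
    a u = u ∧
    b u - u = D ((RatFunc.X)⁻¹) / (RatFunc.X)⁻¹ ∧
    u = (1 / 2) * (D RatFunc.X / RatFunc.X) := by
  replace hu : u = invFourSqSub RatFunc.X := hu
  have h_half : u = 1 / 2 * (D RatFunc.X / RatFunc.X) := by
    rw [hD, hu]
    exact invFourSqSub_eq_half_div RatFunc.X_ne_zero
  refine ⟨?_, ?_, h_half⟩
  · rw [hu, map_invFourSqSub, ha, invFourSqSub_neg]
  · rw [D.map_inv_div_inv, hu, map_invFourSqSub, hb, invFourSqSub_inv, ← hu, h_half]
    ring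
end
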